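/- In the SEM $M_Q$ constructed from a probabilistic Moore machine $Q$, for all times $t \geq 0$, states $s$, and sequences $\vec{\imath}$, $\vec{o}$, $\vec{s}$ of lengths $k$, $k+1$, $k+1$ respectively: $\mathcal{P}(\vec{S}^{t:t+k} = \vec{s} \wedge \vec{O}^{t:t+k} = \vec{o} \mid \mathrm{do}(S_t := s), \mathrm{do}(\vec{I}^{t:t+k-1} := \vec{\imath})) = Q(s, \vec{\imath})(\vec{o}, \vec{s})$, i.e., the interventional distribution over state and output trajectories in the causal model equals the trace distribution of the Moore machine. -/

import Mathlib

/-- Trace probability of a probabilistic Moore machine. -/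
noncomputable def ptrace {S I O : Type*} [Fintype S] [DecidableEq S] [DecidableEq O]
    (τ : S → I → S → ℝ) (σ : S → O) : S → List I → List O → List S → ℝ
  | s, [], os, ss => if os = [σ s] ∧ ss = [s] then 1 else 0
  | s, i :: is, o :: os, s1 :: ss =>
      if o = σ s ∧ s1 = s then ∑ s' : S, τ s i s' * ptrace τ σ s' is os ss else 0
  | _, _ :: _, _, _ => 0

/-- Interventional probability in the SEM `M_Q` of a state/output trajectory
under `do(S_t := s)` and `do(I⃗ := isf)`, given by Pearl's truncated
factorization: the product of the conditional probabilities of the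
non-intervened variables given their parents. -/
noncomputable def intervProb {S I O : Type*} [Fintype S] [DecidableEq S] [DecidableEq O]
    (τ : S → I → S → ℝ) (σ : S → O) (s : S) (k : ℕ)
    (isf : Fin k → I) (osf : Fin (k + 1) → O) (ssf : Fin (k + 1) → S) : ℝ :=
  (if ssf 0 = s then (1 : ℝ) else 0) *
  (if osf 0 = σ (ssf 0) then 1 else 0) *
  ∏ κ : Fin k,
    τ (ssf κ.castSucc) (isf κ) (ssf κ.succ) *
      (if osf κ.succ = σ (ssf κ.succ) then 1 else 0)

/-!
Unfolding one step of the trace recursion sums over the next state `s'`, but the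
trace from `s'` vanishes unless `s'` is the next recorded state, so the sum collapses
to a single transition probability times the trace of the tail. The truncated
factorization splits off exactly the same factor, and induction on the length closes
the argument.
-/

section

variable {S I O : Type*} [Fintype S] [DecidableEq S] [DecidableEq O]
  (τ : S → I → S → ℝ) (σ : S → O)

theorem ptrace_eq_zero_of_head_ne {s s₁ : S} (h : s₁ ≠ s) (is : List I) (os : List O)
    (ss : List S) : ptrace τ σ s is os (s₁ :: ss) = 0 := by
  rcases is with _ | ⟨i, is⟩
  · simp [ptrace, h]
  · rcases os with _ | ⟨o, os⟩ <;> simp [ptrace, h]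

theorem ptrace_cons_cons_cons (s s₁ s₂ : S) (i : I) (o : O) (is : List I) (os : List O)
    (ss : List S) :
    ptrace τ σ s (i :: is) (o :: os) (s₁ :: s₂ :: ss) =
      (if o = σ s ∧ s₁ = s then 1 else 0) * (τ s i s₂ * ptrace τ σ s₂ is os (s₂ :: ss)) := by
  have hsum : ∑ s' : S, τ s i s' * ptrace τ σ s' is os (s₂ :: ss) =
      τ s i s₂ * ptrace τ σ s₂ is os (s₂ :: ss) :=
    Finset.sum_eq_single s₂
      (fun s' _ hs' => by rw [ptrace_eq_zero_of_head_ne τ σ (Ne.symm hs'), mul_zero])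
      (fun h => absurd (Finset.mem_univ s₂) h)
  rw [ptrace, hsum, ite_zero_mul, one_mul]

theorem intervProb_succ (s : S) (k : ℕ) (isf : Fin (k + 1) → I) (osf : Fin (k + 2) → O)
    (ssf : Fin (k + 2) → S) :
    intervProb τ σ s (k + 1) isf osf ssf =
      (if osf 0 = σ s ∧ ssf 0 = s then 1 else 0) *
        (τ s (isf 0) (ssf 1) *
          intervProb τ σ (ssf 1) k (fun κ ↦ isf κ.succ) (fun κ ↦ osf κ.succ)
            (fun κ ↦ ssf κ.succ)) := by
  by_cases h₀ : ssf 0 = s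
  · simp only [intervProb, Fin.prod_univ_succ, Fin.castSucc_zero, Fin.succ_zero_eq_one,
      Fin.castSucc_succ, h₀, ite_true, one_mul, and_true]
    split_ifs <;> ring
  · simp [intervProb, h₀]

end

/-- in the SEM `M_Q` constructed from a probabilistic Moore machine
`Q`, the interventional distribution over state and output trajectories (under
`do(S_t := s)` and intervening on all inputs) equals the trace distribution
`Q(s, i⃗)(o⃗, s⃗)` of the machine. -/
theorem intervProb_eq_ptrace
    {S I O : Type*} [Fintype S] [DecidableEq S] [DecidableEq O]
    (τ : S → I → S → ℝ) (σ : S → O) (s : S) (k : ℕ)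
    (isf : Fin k → I) (osf : Fin (k + 1) → O) (ssf : Fin (k + 1) → S) :
    intervProb τ σ s k isf osf ssf =
      ptrace τ σ s (List.ofFn isf) (List.ofFn osf) (List.ofFn ssf) := by
  induction k generalizing s with
  | zero =>
    obtain rfl | h := eq_or_ne (ssf 0) s
    · simp [intervProb, ptrace, and_comm]
    · simp [intervProb, ptrace, h]
  | succ k ih =>
    rw [intervProb_succ, ih, List.ofFn_succ (f := isf), List.ofFn_succ (f := osf), List.ofFn_succ (f := ssf),
      List.ofFn_succ (f := fun κ ↦ ssf κ.succ), ptrace_cons_cons_cons]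
    rfl
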